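/- Let p be a prime, G a finite p-group, H a normal subgroup of G, and g ∈ G centralizing H such that G is generated by g together with H (so G is a trivial extension of H). Then the Frattini subgroup of G is generated by g^p together with the Frattini subgroup of H: Φ(G) = ⟨g^p⟩·Φ(H). -/

import Mathlib

/-!
In a finite `p`-group every maximal subgroup is normal of index `p`, so `Φ(G)` contains all
`p`-th powers and commutators. Conversely, if a normal subgroup `K` contains them, then `G ⧸ K`
is an elementary abelian `p`-group, i.e. an `𝔽_p`-vector space, whose maximal subspaces meet in
`0`; hence `Φ(G) ≤ K`. With `g` central and `G = ⟨g⟩H`, every element is `g ^ a * h`, and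
`(g ^ a * h) ^ p = (g ^ p) ^ a * h ^ p`, `⁅g ^ a * h, g ^ b * k⁆ = ⁅h, k⁆`, so
`Φ(G) ≤ ⟨g ^ p⟩ Φ(H)`. The reverse inclusion holds because `H ⧸ (H ⊓ Φ(G))` is again
elementary abelian.
-/

open Subgroup
open scoped commutatorElement

theorem frattini_eq_bot_of_pow_eq_one {p : ℕ} [Fact p.Prime] {Q : Type*} [CommGroup Q]
    (hpow : ∀ x : Q, x ^ p = 1) : frattini Q = ⊥ := by
  have : Module (ZMod p) (Additive Q) := AddCommGroup.zmodModule (G := Additive Q) hpow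
  let e : Subgroup Q ≃o Submodule (ZMod p) (Additive Q) :=
    Subgroup.toAddSubgroup.trans (AddSubgroup.toZModSubmodule p)
  apply e.injective
  rw [frattini, e.map_radical, BotHomClass.map_bot, Order.radical, ← sInf_eq_iInf]
  exact IsSemisimpleModule.jacobson_eq_bot _ _

theorem frattini_le_of_pow_mem_of_commutator_le {p : ℕ} [Fact p.Prime] {G : Type*} [Group G]
    {K : Subgroup G} [K.Normal] (hpow : ∀ x : G, x ^ p ∈ K) (hcomm : commutator G ≤ K) :
    frattini G ≤ K := by
  have : IsMulCommutative (G ⧸ K) := Normal.quotient_commutative_iff_commutator_le.mpr hcomm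
  let _ : CommGroup (G ⧸ K) := { mul_comm := mul_comm' }
  have hbot : frattini (G ⧸ K) = ⊥ := frattini_eq_bot_of_pow_eq_one <|
    QuotientGroup.forall_mk.mpr fun x ↦ (QuotientGroup.eq_one_iff _).mpr (hpow x)
  calc frattini G ≤ (frattini (G ⧸ K)).comap (QuotientGroup.mk' K) :=
        frattini_le_comap_frattini_of_surjective (QuotientGroup.mk'_surjective K)
    _ = K := by rw [hbot, MonoidHom.comap_bot, QuotientGroup.ker_mk']

namespace IsPGroup

variable {p : ℕ} [Fact p.Prime] {G : Type*} [Group G] [Finite G]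

theorem normal_of_isCoatom (hG : IsPGroup p G) {M : Subgroup G} (hM : IsCoatom M) : M.Normal :=
  have := hG.isNilpotent
  NormalizerCondition.normal_of_coatom M Group.normalizerCondition_of_isNilpotent hM

theorem card_quotient_of_isCoatom (hG : IsPGroup p G) {M : Subgroup G} [M.Normal]
    (hM : IsCoatom M) : Nat.card (G ⧸ M) = p := by
  have : IsSimpleOrder (Set.Ici M) := Set.isSimpleOrder_Ici_iff_isCoatom.mpr hM
  have : IsSimpleOrder (Subgroup (G ⧸ M)) :=
    OrderIso.isSimpleOrder (β := Set.Ici M) (QuotientGroup.comapMk'OrderIso M)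
  have : Nontrivial (G ⧸ M) := Subgroup.nontrivial_iff.mp inferInstance
  have hdvd : p ∣ Nat.card (G ⧸ M) :=
    (hG.to_quotient M).card_eq_or_dvd.resolve_left Finite.one_lt_card.ne'
  obtain ⟨y, hy⟩ := exists_prime_orderOf_dvd_card' p hdvd
  have hy1 : y ≠ 1 := by rintro rfl; simp [(Fact.out : p.Prime).ne_one.symm] at hy
  have hytop : zpowers y = ⊤ :=
    (IsSimpleOrder.eq_bot_or_eq_top _).resolve_left (zpowers_ne_bot.mpr hy1)
  rw [← card_top, ← hytop, Nat.card_zpowers, hy]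

theorem pow_mem_frattini (hG : IsPGroup p G) (x : G) : x ^ p ∈ frattini G := by
  simp only [frattini, Order.radical, mem_iInf]
  intro M hM
  have := hG.normal_of_isCoatom hM
  simpa only [M.index_eq_card, hG.card_quotient_of_isCoatom hM] using M.pow_index_mem x

theorem commutator_le_frattini (hG : IsPGroup p G) : commutator G ≤ frattini G := by
  refine le_iInf₂ fun M hM ↦ ?_
  have := hG.normal_of_isCoatom hM
  have := isCyclic_of_prime_card (hG.card_quotient_of_isCoatom hM)
  exact Normal.quotient_commutative_iff_commutator_le.mp inferInstance

theorem map_subtype_frattini_le (hG : IsPGroup p G) (H : Subgroup G) :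
    (frattini H).map H.subtype ≤ frattini G := by
  rw [map_le_iff_le_comap]
  refine frattini_le_of_pow_mem_of_commutator_le (fun x ↦ hG.pow_mem_frattini (x : G)) ?_
  rw [← map_le_iff_le_comap, _root_.commutator_def, map_commutator]
  exact (commutator_mono le_top le_top).trans hG.commutator_le_frattini

end IsPGroup

namespace Subgroup

variable {G : Type*} [Group G]

theorem normal_of_le_center {Z : Subgroup G} (hZ : Z ≤ center G) : Z.Normal :=
  ⟨fun z hz g ↦ by rwa [mem_center_iff.mp (hZ hz) g, mul_inv_cancel_right]⟩

theorem mem_center_of_zpowers_sup_eq_top {H : Subgroup G} {g : G}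
    (hcen : ∀ x ∈ H, g * x = x * g) (hgen : zpowers g ⊔ H = ⊤) : g ∈ center G := by
  have : zpowers g ⊔ H ≤ centralizer {g} :=
    sup_le (zpowers_le.mpr (mem_centralizer_singleton_iff.mpr rfl))
      fun x hx ↦ mem_centralizer_singleton_iff.mpr (hcen x hx).symm
  exact mem_center_iff.mpr fun x ↦ mem_centralizer_singleton_iff.mp (this (hgen ▸ mem_top x))

theorem commutatorElement_mul_left_of_mem_center {c : G} (hc : c ∈ center G) (x y : G) :
    ⁅c * x, y⁆ = ⁅x, y⁆ := by
  rw [mem_center_iff] at hc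
  rw [commutatorElement_mul_left_eq_conj_mul, commutatorElement_eq_one_iff_mul_comm.mpr (hc y).symm,
    mul_one, ← hc, mul_inv_cancel_right]

theorem commutatorElement_mul_right_of_mem_center {c : G} (hc : c ∈ center G) (x y : G) :
    ⁅x, c * y⁆ = ⁅x, y⁆ := by
  rw [mem_center_iff] at hc
  rw [commutatorElement_mul_right_eq_mul_conj, commutatorElement_eq_one_iff_mul_comm.mpr (hc x),
    one_mul, ← hc, mul_inv_cancel_right]

theorem commutator_le_map_commutator_of_le_center {Z H : Subgroup G} (hZ : Z ≤ center G)
    (hsup : Z ⊔ H = ⊤) : _root_.commutator G ≤ (_root_.commutator H).map H.subtype := by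
  have := normal_of_le_center hZ
  rw [_root_.commutator_def, commutator_le]
  rintro x - y -
  obtain ⟨c, hc, h, hh, rfl⟩ := mem_sup_of_normal_left.mp (hsup ▸ mem_top x)
  obtain ⟨d, hd, k, hk, rfl⟩ := mem_sup_of_normal_left.mp (hsup ▸ mem_top y)
  rw [commutatorElement_mul_left_of_mem_center (hZ hc),
    commutatorElement_mul_right_of_mem_center (hZ hd)]
  exact ⟨⁅⟨h, hh⟩, ⟨k, hk⟩⁆, commutator_mem_commutator (mem_top _) (mem_top _), rfl⟩

end Subgroup

theorem stmt_9 (p : ℕ) (hp : p.Prime) (G : Type*) [Group G] [Finite G]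
    (hG : IsPGroup p G) (H : Subgroup G) [H.Normal]
    (g : G) (hcen : ∀ x ∈ H, g * x = x * g)
    (hgen : Subgroup.zpowers g ⊔ H = ⊤) :
    frattini G = Subgroup.zpowers (g ^ p) ⊔ Subgroup.map H.subtype (frattini H) := by
  have := Fact.mk hp
  have hH : IsPGroup p H := hG.to_subgroup H
  have hg : g ∈ center G := mem_center_of_zpowers_sup_eq_top hcen hgen
  have hcentral : zpowers g ≤ center G := zpowers_le.mpr hg
  have : (zpowers (g ^ p)).Normal := normal_of_le_center (zpowers_le.mpr (pow_mem hg p))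
  refine le_antisymm (frattini_le_of_pow_mem_of_commutator_le (p := p) ?_ ?_)
    (sup_le (zpowers_le.mpr (hG.pow_mem_frattini g)) (hG.map_subtype_frattini_le H))
  · intro x
    obtain ⟨_, ⟨a, rfl⟩, h, hh, rfl⟩ := mem_sup_of_normal_right.mp (hgen ▸ mem_top x)
    have hcomm : Commute (g ^ a) h := (mem_center_iff.mp (hcentral ⟨a, rfl⟩) h).symm
    have hpow_comm : (g ^ a) ^ p = (g ^ p) ^ a := by
      rw [← zpow_natCast, ← zpow_natCast g, ← zpow_mul, ← zpow_mul, mul_comm]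
    rw [hcomm.mul_pow, hpow_comm]
    exact mul_mem (mem_sup_left (zpow_mem (mem_zpowers _) a))
      (mem_sup_right ⟨⟨h, hh⟩ ^ p, hH.pow_mem_frattini _, rfl⟩)
  · calc _root_.commutator G ≤ (_root_.commutator H).map H.subtype :=
          commutator_le_map_commutator_of_le_center hcentral hgen
      _ ≤ (frattini H).map H.subtype := map_mono hH.commutator_le_frattini
      _ ≤ _ := le_sup_right
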